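/- A term of the form f_1...f_n g_1...g_m(e), where f_n ∈ {∃, I}, f_1,...,f_{n-1} ∈ {p,s,¬,∃,I}, and g_1,...,g_m ∈ {p,s,¬}, with f_n = I, is satisfiable if and only if the parity of the number of negations in f_1...f_{n-1} equals the parity of the number of negations in g_1...g_m. -/

import Mathlib

/-- The unary operators of the algebra. -/
inductive Op : Type
  | p | s | i | neg | ex
deriving DecidableEq

/-- Permutation of `Fin n` swapping the last two coordinates (identity for `n ≤ 1`). -/
def swapLast (n : ℕ) : Equiv.Perm (Fin n) :=
  if h : 2 ≤ n then Equiv.swap ⟨n - 1, by omega⟩ ⟨n - 2, by omega⟩ else 1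

/-- Action of an operator on a relation (of some arity `n`) over `A`:
`p` moves the last coordinate to the front, `s` swaps the last two coordinates,
`neg` complements within `A^n`, `ex` projects away the last coordinate, and `i`
keeps tuples with equal last two coordinates and drops the last one; `p`, `s`,
`i` are the identity on arity `≤ 1` and `ex` the identity on arity `0`. -/
def applyOp (A : Type) : Op → (Σ n, Set (Fin n → A)) → (Σ n, Set (Fin n → A))
  | Op.p, ⟨n, R⟩ => ⟨n, {t | t ∘ (finRotate n) ∈ R}⟩
  | Op.s, ⟨n, R⟩ => ⟨n, {t | t ∘ (swapLast n) ∈ R}⟩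
  | Op.neg, ⟨n, R⟩ => ⟨n, Rᶜ⟩
  | Op.ex, ⟨0, R⟩ => ⟨0, R⟩
  | Op.ex, ⟨m + 1, R⟩ => ⟨m, {t | ∃ a : A, Fin.snoc t a ∈ R}⟩
  | Op.i, ⟨0, R⟩ => ⟨0, R⟩
  | Op.i, ⟨1, R⟩ => ⟨1, R⟩
  | Op.i, ⟨m + 2, R⟩ => ⟨m + 1, {t | Fin.snoc t (t (Fin.last m)) ∈ R}⟩

/-- Interpretation of a string of operators (head outermost) applied to a base
`k`-ary relation. -/
def interpOps (A : Type) (k : ℕ) (base : Set (Fin k → A)) :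
    List Op → Σ n, Set (Fin n → A)
  | [] => ⟨k, base⟩
  | op :: ops => applyOp A op (interpOps A k base ops)

/-- The binary identity relation `e` over `M`. -/
def eRel (M : Type) : Set (Fin 2 → M) := {t | t 0 = t 1}


/-!
Operators from `{p, s, ¬}` keep a binary relation invariant under swapping its two coordinates,
so `g₁…gₘ(e)` is `e` or its complement according to the parity of the negations. Applying `I`
then yields the full or the empty unary relation. On a relation of arity at most one that is
full or empty, `p`, `s`, `I` and `∃` (over a nonempty domain) act trivially while `¬` toggles,
so the term is nonempty exactly when the two parities agree.
-/

theorem interpOps_eRel_of_forall_mem (M : Type) (gs : List Op)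
    (hgs : ∀ g ∈ gs, g = Op.p ∨ g = Op.s ∨ g = Op.neg) :
    interpOps M 2 (eRel M) gs = ⟨2, {t | t 0 = t 1 ↔ Even (gs.count Op.neg)}⟩ := by
  induction gs with
  | nil => simp [interpOps, eRel]
  | cons g gs ih =>
    rw [interpOps, ih fun g hg => hgs g (List.mem_cons_of_mem _ hg)]
    rcases hgs g List.mem_cons_self with rfl | rfl | rfl
    · simp [applyOp, eq_comm]
    · simp [applyOp, swapLast, eq_comm]
    · simp only [applyOp, List.count_cons_self, Nat.even_add_one]
      congr 1
      ext t
      simp only [Set.mem_compl_iff, Set.mem_ofPred_eq]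
      tauto

def IsConstRel {M : Type} (X : Σ n, Set (Fin n → M)) (P : Prop) : Prop :=
  X.1 ≤ 1 ∧ ∀ t, t ∈ X.2 ↔ P

namespace IsConstRel

variable {M : Type} {X : Σ n, Set (Fin n → M)} {P : Prop}

theorem of_iff (h : IsConstRel X P) {Q : Prop} (hPQ : P ↔ Q) : IsConstRel X Q :=
  ⟨h.1, fun t => (h.2 t).trans hPQ⟩

theorem applyOp_neg (h : IsConstRel X P) : IsConstRel (applyOp M Op.neg X) ¬P :=
  ⟨h.1, fun t => not_congr (h.2 t)⟩

theorem applyOp_of_ne_neg [Nonempty M] (h : IsConstRel X P) {f : Op} (hf : f ≠ Op.neg) :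
    IsConstRel (applyOp M f X) P := by
  obtain ⟨n, R⟩ := X
  obtain ⟨hn, hR⟩ := h
  dsimp only at hn hR
  cases f with
  | p => exact ⟨hn, fun t => hR _⟩
  | s => exact ⟨hn, fun t => hR _⟩
  | neg => exact absurd rfl hf
  | i =>
    obtain rfl | rfl : n = 0 ∨ n = 1 := by omega
    all_goals exact ⟨hn, hR⟩
  | ex =>
    obtain rfl | rfl : n = 0 ∨ n = 1 := by omega
    · exact ⟨hn, hR⟩
    · refine ⟨zero_le_one, fun t => ⟨fun ⟨a, ha⟩ => (hR _).1 ha, fun hP => ?_⟩⟩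
      exact ⟨Classical.arbitrary M, (hR _).2 hP⟩

end IsConstRel

theorem isConstRel_interpOps_append_i (M : Type) [Nonempty M] (fs gs : List Op)
    (hgs : ∀ g ∈ gs, g = Op.p ∨ g = Op.s ∨ g = Op.neg) :
    IsConstRel (interpOps M 2 (eRel M) (fs ++ Op.i :: gs))
      (Even (fs.count Op.neg) ↔ Even (gs.count Op.neg)) := by
  induction fs with
  | nil =>
    rw [List.nil_append, interpOps, interpOps_eRel_of_forall_mem M gs hgs]
    refine ⟨le_rfl, fun (t : Fin 1 → M) => ?_⟩
    change ((Fin.snoc t (t 0) : Fin 2 → M) 0 = (Fin.snoc t (t 0) : Fin 2 → M) 1 ↔ _) ↔ _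
    simp [Fin.snoc]
  | cons f fs ih =>
    by_cases hf : f = Op.neg
    · subst hf
      refine ih.applyOp_neg.of_iff ?_
      rw [List.count_cons_self, Nat.even_add_one, not_iff]
    · refine (ih.applyOp_of_ne_neg hf).of_iff ?_
      rw [List.count_cons_of_ne hf]

/-- A term `f₁…f_{n-1} I g₁…g_m(e)` with `g₁,…,g_m ∈ {p,s,¬}` is satisfiable
iff the parity of negations among `f₁,…,f_{n-1}` equals the parity of negations
among `g₁,…,g_m`. -/
theorem sat_of_I_term (fs gs : List Op)
    (hgs : ∀ g ∈ gs, g = Op.p ∨ g = Op.s ∨ g = Op.neg) :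
    (∃ (M : Type), Nonempty M ∧
        (interpOps M 2 (eRel M) (fs ++ Op.i :: gs)).2.Nonempty) ↔
      (Even (fs.count Op.neg) ↔ Even (gs.count Op.neg)) := by
  constructor
  · rintro ⟨M, _, t, ht⟩
    exact ((isConstRel_interpOps_append_i M fs gs hgs).2 t).1 ht
  · intro hparity
    exact ⟨Unit, inferInstance, fun _ => (),
      ((isConstRel_interpOps_append_i Unit fs gs hgs).2 _).2 hparity⟩
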